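/- There are d2 agents: for each agent k ∈ {1,…,d2}, let x_1^{(k)},…,x_{T0}^{(k)} be i.i.d. random vectors in ℝ^{d1} with ‖x^{(k)}‖₂ ≤ 1 almost surely, the families being independent across agents, and let Σ^{(k)} = E[x_1^{(k)} x_1^{(k)ᵀ}]. Let S ⊆ {1,…,d1} with |S| = s ≥ 1 and α0 > 0, and assume that for every agent k, βᵀΣ^{(k)}β ≥ α0‖β‖₂² for all β ∈ ℂ_S. Let C(s) = (√(α0/(64s) + 1) − 1)². Then for every T0 ≥ 2·log(2d1² + d1)/C(s), with probability at least 1 − d2·exp(−T0·C(s)/2), it holds simultaneously for all tuples (Δ^{(1)},…,Δ^{(d2)}) with every Δ^{(k)} ∈ ℂ_S that (1/(2T0))·Σ_{k=1}^{d2} Σ_{i=1}^{T0} ⟨x_i^{(k)}, Δ^{(k)}⟩² ≥ (α0/4)·Σ_{k=1}^{d2} ‖Δ^{(k)}‖₂². -/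

import Mathlib

/-! On the event that, for every agent, each entry of the empirical Gram matrix `∑ᵢ xᵢ xᵢᵀ`
lies within `T0 t` of `T0 Σ`, with `t = α0 / (32 s)`, the empirical quadratic form differs from
`T0 βᵀΣβ` by at most `T0 t ‖β‖₁²`, and on the cone `ℂ_S` we have `‖β‖₁² ≤ 16 s ‖β‖₂²`; so the
empirical form keeps half of the restricted eigenvalue `α0`. Each entry is a sum of `T0`
independent `[-1, 1]`-valued variables, so Hoeffding's inequality and a union bound over the
`d1²` entries and the `d2` agents control the failure probability; since `C(s) ≤ t² / 2`, the
lower bound on `T0` turns `2 d1² exp (-T0 t² / 2)` into `exp (-T0 C(s) / 2)`. -/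

open MeasureTheory ProbabilityTheory Real Finset
open scoped NNReal

section Deterministic

variable {n : Type*} [Fintype n]

lemma sq_sum_abs_le_of_mem_cone [DecidableEq n] {S : Finset n} {β : EuclideanSpace ℝ n}
    (hβ : ∑ j ∈ Sᶜ, |β j| ≤ 3 * ∑ j ∈ S, |β j|) :
    (∑ j, |β j|) ^ 2 ≤ 16 * #S * ‖β‖ ^ 2 := by
  have h_l1 : ∑ j, |β j| ≤ 4 * ∑ j ∈ S, |β j| := by
    rw [← sum_add_sum_compl S]; linarith
  have h_cs : (∑ j ∈ S, |β j|) ^ 2 ≤ #S * ‖β‖ ^ 2 := by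
    calc (∑ j ∈ S, |β j|) ^ 2 ≤ #S * ∑ j ∈ S, |β j| ^ 2 := sq_sum_le_card_mul_sum_sq
      _ ≤ #S * ‖β‖ ^ 2 := by
        rw [EuclideanSpace.real_norm_sq_eq]
        gcongr
        simpa only [sq_abs] using sum_le_univ_sum_of_nonneg fun j => sq_nonneg (β j)
  calc (∑ j, |β j|) ^ 2 ≤ (4 * ∑ j ∈ S, |β j|) ^ 2 := by gcongr
    _ ≤ 16 * #S * ‖β‖ ^ 2 := by nlinarith

lemma abs_sum_sum_mul_mul_le (A : Matrix n n ℝ) {ε : ℝ} (hA : ∀ j j', |A j j'| ≤ ε)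
    (β : n → ℝ) :
    |∑ j, ∑ j', β j * A j j' * β j'| ≤ ε * (∑ j, |β j|) ^ 2 := by
  rw [sq, sum_mul_sum, mul_sum]
  refine (abs_sum_le_sum_abs _ _).trans (sum_le_sum fun j _ => ?_)
  rw [mul_sum]
  refine (abs_sum_le_sum_abs _ _).trans (sum_le_sum fun j' _ => ?_)
  rw [abs_mul, abs_mul, mul_comm ε, mul_right_comm]
  gcongr
  exact hA j j'

variable {ι : Type*} [Fintype ι]

lemma sum_sq_sum_mul_sub_eq (x : ι → n → ℝ) (Sig : Matrix n n ℝ) (β : n → ℝ) :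
    ∑ i, (∑ j, x i j * β j) ^ 2 - Fintype.card ι * ∑ j, ∑ j', β j * Sig j j' * β j' =
      ∑ j, ∑ j', β j * (∑ i, (x i j * x i j' - Sig j j')) * β j' := by
  simp only [sq, mul_sum, sum_mul, mul_sub, sub_mul, sum_sub_distrib,
    sum_const, card_univ, nsmul_eq_mul]
  rw [sum_comm (γ := ι), sum_congr rfl fun j _ => sum_comm (γ := ι)]
  congr 1
  · exact sum_congr rfl fun _ _ => sum_congr rfl fun _ _ => sum_congr rfl fun _ _ => by ring
  · exact sum_congr rfl fun _ _ => sum_congr rfl fun _ _ => by ring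

lemma card_mul_sub_mul_sq_norm_le_sum_sq [DecidableEq n] (x : ι → EuclideanSpace ℝ n)
    (Sig : Matrix n n ℝ) {S : Finset n} {α t : ℝ} (ht : 0 ≤ t)
    (h_dev : ∀ j j', |∑ i, (x i j * x i j' - Sig j j')| ≤ Fintype.card ι * t)
    {β : EuclideanSpace ℝ n} (hRE : α * ‖β‖ ^ 2 ≤ ∑ j, ∑ j', β j * Sig j j' * β j')
    (hβ : ∑ j ∈ Sᶜ, |β j| ≤ 3 * ∑ j ∈ S, |β j|) :
    Fintype.card ι * (α - 16 * #S * t) * ‖β‖ ^ 2 ≤ ∑ i, (∑ j, x i j * β j) ^ 2 := by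
  have h_dev_form := abs_sum_sum_mul_mul_le _ h_dev β
  rw [← sum_sq_sum_mul_sub_eq] at h_dev_form
  have h_RE := mul_le_mul_of_nonneg_left hRE (Nat.cast_nonneg (Fintype.card ι))
  have h_cone := mul_le_mul_of_nonneg_left (sq_sum_abs_le_of_mem_cone hβ)
    (mul_nonneg (Nat.cast_nonneg (Fintype.card ι)) ht)
  linarith [(abs_le.mp h_dev_form).1]

end Deterministic

namespace EuclideanSpace

variable {n : Type*} [Fintype n]

lemma measurable_apply_mul_apply (j j' : n) :
    Measurable fun v : EuclideanSpace ℝ n => v j * v j' :=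
  ((proj j).continuous.mul (proj j').continuous).measurable

lemma abs_apply_mul_apply_le_one {v : EuclideanSpace ℝ n} (hv : ‖v‖ ≤ 1) (j j' : n) :
    |v j * v j'| ≤ 1 := by
  have h_coord : ∀ j, |v j| ≤ 1 := fun j => (PiLp.norm_apply_le v j).trans hv
  rw [abs_mul]
  exact mul_le_one₀ (h_coord j) (abs_nonneg _) (h_coord j')

end EuclideanSpace

section Concentration

variable {Ω ι : Type*} [MeasurableSpace Ω] {μ : Measure Ω} [IsProbabilityMeasure μ]

lemma one_sub_card_mul_le_measureReal [Fintype ι] {E : ι → Set Ω} {A : Set Ω} {δ : ℝ}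
    (hE : ∀ i, μ.real (E i) ≤ δ) (hA : (⋃ i, E i)ᶜ ⊆ A) :
    1 - Fintype.card ι * δ ≤ μ.real A := by
  have h_union : μ.real (⋃ i, E i) ≤ Fintype.card ι * δ := by
    simpa using (measureReal_iUnion_fintype_le E).trans (sum_le_sum fun i _ => hE i)
  -- subadditivity rather than `probReal_compl_eq_one_sub`, so the `E i` need not be measurable
  have h_compl : 1 ≤ μ.real (⋃ i, E i) + μ.real (⋃ i, E i)ᶜ := by
    have h := measureReal_union_le (μ := μ) (⋃ i, E i) (⋃ i, E i)ᶜ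
    rwa [Set.union_compl_self, probReal_univ] at h
  linarith [measureReal_mono (μ := μ) hA]

lemma measureReal_abs_sum_ge_le_of_iIndepFun {X : ι → Ω → ℝ} (h_indep : iIndepFun X μ)
    {c : ι → ℝ≥0} {s : Finset ι} (h_subG : ∀ i ∈ s, HasSubgaussianMGF (X i) (c i) μ)
    {ε : ℝ} (hε : 0 ≤ ε) :
    μ.real {ω | ε ≤ |∑ i ∈ s, X i ω|} ≤ 2 * exp (-ε ^ 2 / (2 * ∑ i ∈ s, c i)) := by
  have h_upper := HasSubgaussianMGF.measure_sum_ge_le_of_iIndepFun h_indep h_subG hε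
  have h_lower := HasSubgaussianMGF.measure_sum_ge_le_of_iIndepFun
    (h_indep.comp (fun _ => Neg.neg) fun _ => measurable_neg) (fun i hi => (h_subG i hi).neg) hε
  have h_split : {ω | ε ≤ |∑ i ∈ s, X i ω|} ⊆
      {ω | ε ≤ ∑ i ∈ s, X i ω} ∪ {ω | ε ≤ ∑ i ∈ s, (Neg.neg ∘ X i) ω} := by
    intro ω hω
    simpa [le_abs', sum_neg_distrib, le_neg, or_comm] using hω
  calc μ.real {ω | ε ≤ |∑ i ∈ s, X i ω|}
      ≤ μ.real {ω | ε ≤ ∑ i ∈ s, X i ω} + μ.real {ω | ε ≤ ∑ i ∈ s, (Neg.neg ∘ X i) ω} :=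
        (measureReal_mono h_split).trans (measureReal_union_le _ _)
    _ ≤ 2 * exp (-ε ^ 2 / (2 * ∑ i ∈ s, c i)) := by linarith

lemma measureReal_abs_sum_sub_integral_ge_le [Fintype ι] {X : ι → Ω → ℝ}
    (h_meas : ∀ i, Measurable (X i)) (h_indep : iIndepFun X μ)
    (h_bound : ∀ i, ∀ᵐ ω ∂μ, |X i ω| ≤ 1) {ε : ℝ} (hε : 0 ≤ ε) :
    μ.real {ω | ε ≤ |∑ i, (X i ω - μ[X i])|} ≤ 2 * exp (-ε ^ 2 / (2 * Fintype.card ι)) := by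
  have h_subG : ∀ i ∈ univ, HasSubgaussianMGF (fun ω => X i ω - μ[X i]) 1 μ := by
    intro i _
    convert hasSubgaussianMGF_of_mem_Icc (h_meas i).aemeasurable
      (by filter_upwards [h_bound i] with ω hω using abs_le.mp hω)
    norm_num
  have h_indep' : iIndepFun (fun i ω => X i ω - μ[X i]) μ :=
    h_indep.comp (fun i y => y - ∫ ω, X i ω ∂μ) fun _ => measurable_id.sub_const _
  simpa using measureReal_abs_sum_ge_le_of_iIndepFun h_indep' h_subG hε

variable {n : Type*} [Fintype n]

lemma measureReal_exists_abs_sum_mul_apply_sub_ge_le [Fintype ι]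
    {x : ι → Ω → EuclideanSpace ℝ n} (hx_meas : ∀ i, Measurable (x i))
    (hx_indep : iIndepFun x μ) {i₀ : ι} (hx_ident : ∀ i, IdentDistrib (x i) (x i₀) μ μ)
    (hx_bound : ∀ i, ∀ᵐ ω ∂μ, ‖x i ω‖ ≤ 1) {Sig : Matrix n n ℝ}
    (hSig : ∀ j j', Sig j j' = ∫ ω, x i₀ ω j * x i₀ ω j' ∂μ) {ε : ℝ} (hε : 0 ≤ ε) :
    μ.real {ω | ∃ j j', ε ≤ |∑ i, (x i ω j * x i ω j' - Sig j j')|} ≤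
      Fintype.card n ^ 2 * (2 * exp (-ε ^ 2 / (2 * Fintype.card ι))) := by
  have h_entry : ∀ j j', μ.real {ω | ε ≤ |∑ i, (x i ω j * x i ω j' - Sig j j')|} ≤
      2 * exp (-ε ^ 2 / (2 * Fintype.card ι)) := by
    intro j j'
    have h_prod := EuclideanSpace.measurable_apply_mul_apply (n := n) j j'
    have h_mean : ∀ i, ∫ ω, x i ω j * x i ω j' ∂μ = Sig j j' := fun i =>
      ((hx_ident i).comp h_prod).integral_eq.trans (hSig j j').symm
    have h_bound : ∀ i, ∀ᵐ ω ∂μ, |x i ω j * x i ω j'| ≤ 1 := fun i => by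
      filter_upwards [hx_bound i] with ω hω
      exact EuclideanSpace.abs_apply_mul_apply_le_one hω j j'
    simpa only [h_mean] using measureReal_abs_sum_sub_integral_ge_le
      (X := fun i ω => x i ω j * x i ω j') (fun i => h_prod.comp (hx_meas i))
      (hx_indep.comp (fun _ v => v j * v j') fun _ => h_prod) h_bound hε
  have h_union : {ω | ∃ j j', ε ≤ |∑ i, (x i ω j * x i ω j' - Sig j j')|} =
      ⋃ p : n × n, {ω | ε ≤ |∑ i, (x i ω p.1 * x i ω p.2 - Sig p.1 p.2)|} := by
    ext ω; simp
  rw [h_union]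
  refine (measureReal_iUnion_fintype_le _).trans ?_
  refine (sum_le_sum fun p _ => h_entry p.1 p.2).trans_eq ?_
  simp [sq]

end Concentration

lemma sqrt_add_one_sub_one_sq_pos {u : ℝ} (hu : 0 < u) : 0 < (√(u + 1) - 1) ^ 2 := by
  have h : 1 < √(u + 1) := by rw [lt_sqrt zero_le_one]; linarith
  exact pow_pos (sub_pos.mpr h) 2

lemma sqrt_add_one_sub_one_sq_le {u : ℝ} (hu : 0 ≤ u) : (√(u + 1) - 1) ^ 2 ≤ u ^ 2 / 4 := by
  have h_lower : 1 ≤ √(u + 1) := one_le_sqrt.mpr (by linarith)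
  have h_upper : √(u + 1) ≤ 1 + u / 2 := sqrt_le_iff.mpr ⟨by linarith, by nlinarith⟩
  calc (√(u + 1) - 1) ^ 2 ≤ (u / 2) ^ 2 := pow_le_pow_left₀ (by linarith) (by linarith) 2
    _ = u ^ 2 / 4 := by ring

lemma sq_mul_two_mul_exp_le_exp {d T C t : ℝ} (hd : 0 ≤ d) (hT : 0 < T) (hC : 0 < C)
    (hCt : C ≤ t ^ 2 / 2) (hT_big : 2 * log (2 * d ^ 2 + d) / C ≤ T) :
    d ^ 2 * (2 * exp (-(T * t) ^ 2 / (2 * T))) ≤ exp (-(T * C) / 2) := by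
  have h_exp : exp (-(T * t) ^ 2 / (2 * T)) ≤ exp (-(T * C)) := by
    rw [exp_le_exp, show -(T * t) ^ 2 / (2 * T) = -(T * (t ^ 2 / 2)) by field_simp]
    nlinarith
  have h_card : 2 * d ^ 2 ≤ exp (T * C / 2) :=
    calc 2 * d ^ 2 ≤ 2 * d ^ 2 + d := by linarith
      _ ≤ exp (log (2 * d ^ 2 + d)) := le_exp_log _
      _ ≤ exp (T * C / 2) := exp_le_exp.mpr (by linarith [(div_le_iff₀ hC).mp hT_big])
  calc d ^ 2 * (2 * exp (-(T * t) ^ 2 / (2 * T))) ≤ 2 * d ^ 2 * exp (-(T * C)) := by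
        nlinarith [sq_nonneg d]
    _ ≤ exp (T * C / 2) * exp (-(T * C)) := mul_le_mul_of_nonneg_right h_card (exp_nonneg _)
    _ = exp (-(T * C) / 2) := by rw [← exp_add]; ring_nf

theorem multi_agent_rsc_condition_general
    {d1 d2 : ℕ}
    {Ω : Type*} [MeasurableSpace Ω] (μ : Measure Ω) [IsProbabilityMeasure μ]
    (T0 : ℕ) (hT0 : 0 < T0)
    (x : Fin d2 → Fin T0 → Ω → EuclideanSpace ℝ (Fin d1))
    (hx_meas : ∀ k i, Measurable (x k i))
    -- i.i.d. within each agent: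
    (hx_indep : ∀ k, iIndepFun (x k) μ)
    (hx_ident : ∀ k i j, IdentDistrib (x k i) (x k j) μ μ)
    (hx_bound : ∀ k i, ∀ᵐ ω ∂μ, ‖x k i ω‖ ≤ 1)
    -- the support S, |S| = s ≥ 1:
    (S : Finset (Fin d1)) (s : ℕ) (hs : 1 ≤ s) (hcard : S.card = s)
    -- per-agent population Gram matrices:
    (Sig : Fin d2 → Matrix (Fin d1) (Fin d1) ℝ)
    (hSig : ∀ k i j, Sig k i j = ∫ ω, x k ⟨0, hT0⟩ ω i * x k ⟨0, hT0⟩ ω j ∂μ)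
    -- restricted eigenvalue condition for every agent:
    (α0 : ℝ) (hα0 : 0 < α0)
    (hRE : ∀ k, ∀ β : EuclideanSpace ℝ (Fin d1),
      (∑ j ∈ Sᶜ, |β j|) ≤ 3 * ∑ j ∈ S, |β j| →
      α0 * ‖β‖ ^ 2 ≤ ∑ i, ∑ j, β i * Sig k i j * β j)
    -- T0 large enough:
    (hT0_big : 2 * Real.log (2 * (d1 : ℝ) ^ 2 + d1) /
      ((Real.sqrt (α0 / (64 * s) + 1) - 1) ^ 2) ≤ (T0 : ℝ)) :
    1 - d2 * Real.exp (-((T0 : ℝ) * (Real.sqrt (α0 / (64 * s) + 1) - 1) ^ 2) / 2) ≤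
      (μ {ω | ∀ Δ : Fin d2 → EuclideanSpace ℝ (Fin d1),
        (∀ k, (∑ j ∈ Sᶜ, |Δ k j|) ≤ 3 * ∑ j ∈ S, |Δ k j|) →
        (α0 / 4) * ∑ k, ‖Δ k‖ ^ 2 ≤
          (1 / (2 * (T0 : ℝ))) * ∑ k, ∑ i, (∑ j, x k i ω j * Δ k j) ^ 2}).toReal := by
  set u := α0 / (64 * s) with hu
  set C := (√(u + 1) - 1) ^ 2
  set t := 2 * u
  have hs₀ : (0 : ℝ) < s := by exact_mod_cast hs
  have hT₀ : (0 : ℝ) < T0 := by exact_mod_cast hT0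
  have hC : 0 < C := sqrt_add_one_sub_one_sq_pos (by positivity)
  have hCt : C ≤ t ^ 2 / 2 :=
    (sqrt_add_one_sub_one_sq_le (by positivity)).trans (by nlinarith [sq_nonneg u])
  have h_rate : α0 - 16 * s * t = α0 / 2 := by simp only [t, hu]; field_simp; ring
  set bad : Fin d2 → Set Ω := fun k =>
    {ω | ∃ j j', T0 * t ≤ |∑ i, (x k i ω j * x k i ω j' - Sig k j j')|}
  have h_bad : ∀ k, μ.real (bad k) ≤ exp (-(T0 * C) / 2) := fun k => by
    refine (measureReal_exists_abs_sum_mul_apply_sub_ge_le (hx_meas k) (hx_indep k)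
      (fun i => hx_ident k i ⟨0, hT0⟩) (hx_bound k) (hSig k) (by positivity)).trans ?_
    simpa using sq_mul_two_mul_exp_le_exp (Nat.cast_nonneg d1) hT₀ hC hCt hT0_big
  refine le_of_eq_of_le (by rw [Fintype.card_fin]) (one_sub_card_mul_le_measureReal h_bad ?_)
  intro ω hω Δ hΔ
  simp only [bad, Set.compl_iUnion, Set.mem_iInter, Set.mem_compl_iff, Set.mem_ofPred_eq,
    not_exists, not_le] at hω
  have h_agent : ∀ k, T0 * (α0 / 2) * ‖Δ k‖ ^ 2 ≤ ∑ i, (∑ j, x k i ω j * Δ k j) ^ 2 := by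
    intro k
    have h := card_mul_sub_mul_sq_norm_le_sum_sq (x k · ω) (Sig k) (t := t) (by positivity)
      (by simpa using fun j j' => (hω k j j').le) (hRE k (Δ k) (hΔ k)) (hΔ k)
    rwa [Fintype.card_fin, hcard, h_rate] at h
  calc (α0 / 4) * ∑ k, ‖Δ k‖ ^ 2 = (1 / (2 * T0)) * ∑ k, T0 * (α0 / 2) * ‖Δ k‖ ^ 2 := by
        rw [← mul_sum]; field_simp; ring
    _ ≤ (1 / (2 * T0)) * ∑ k, ∑ i, (∑ j, x k i ω j * Δ k j) ^ 2 := by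
        gcongr with k; exact h_agent k

theorem multi_agent_rsc_condition
    {d1 d2 : ℕ} (hd1 : 0 < d1) (hd2 : 0 < d2)
    {Ω : Type*} [MeasurableSpace Ω] (μ : Measure Ω) [IsProbabilityMeasure μ]
    (T0 : ℕ) (hT0 : 0 < T0)
    (x : Fin d2 → Fin T0 → Ω → EuclideanSpace ℝ (Fin d1))
    (hx_meas : ∀ k i, Measurable (x k i))
    -- i.i.d. within each agent:
    (hx_indep : ∀ k, iIndepFun (x k) μ)
    (hx_ident : ∀ k i j, IdentDistrib (x k i) (x k j) μ μ)
    -- independent across agents: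
    (hx_agents_indep : iIndepFun
      (fun k => fun ω => fun i : Fin T0 => x k i ω) μ)
    (hx_bound : ∀ k i, ∀ᵐ ω ∂μ, ‖x k i ω‖ ≤ 1)
    -- the support S, |S| = s ≥ 1:
    (S : Finset (Fin d1)) (s : ℕ) (hs : 1 ≤ s) (hcard : S.card = s)
    -- per-agent population Gram matrices:
    (Sig : Fin d2 → Matrix (Fin d1) (Fin d1) ℝ)
    (hSig : ∀ k i j, Sig k i j = ∫ ω, x k ⟨0, hT0⟩ ω i * x k ⟨0, hT0⟩ ω j ∂μ)
    -- restricted eigenvalue condition for every agent: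
    (α0 : ℝ) (hα0 : 0 < α0)
    (hRE : ∀ k, ∀ β : EuclideanSpace ℝ (Fin d1),
      (∑ j ∈ Sᶜ, |β j|) ≤ 3 * ∑ j ∈ S, |β j| →
      α0 * ‖β‖ ^ 2 ≤ ∑ i, ∑ j, β i * Sig k i j * β j)
    -- T0 large enough:
    (hT0_big : 2 * Real.log (2 * (d1 : ℝ) ^ 2 + d1) /
      ((Real.sqrt (α0 / (64 * s) + 1) - 1) ^ 2) ≤ (T0 : ℝ)) :
    1 - d2 * Real.exp (-((T0 : ℝ) * (Real.sqrt (α0 / (64 * s) + 1) - 1) ^ 2) / 2) ≤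
      (μ {ω | ∀ Δ : Fin d2 → EuclideanSpace ℝ (Fin d1),
        (∀ k, (∑ j ∈ Sᶜ, |Δ k j|) ≤ 3 * ∑ j ∈ S, |Δ k j|) →
        (α0 / 4) * ∑ k, ‖Δ k‖ ^ 2 ≤
          (1 / (2 * (T0 : ℝ))) * ∑ k, ∑ i, (∑ j, x k i ω j * Δ k j) ^ 2}).toReal :=
  multi_agent_rsc_condition_general μ T0 hT0 x hx_meas hx_indep hx_ident hx_bound S s hs hcard Sig
    hSig α0 hα0 hRE hT0_big
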